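/- arXiv:1203.6226 — 3 statements merged into one kernel-verified Lean document; each statement's English description precedes it below -/
import Mathlib

section
/- Let X be a nonnegative random variable with mean a > 0 satisfying P(X ≥ k·e·a) ≤ e^{-k+1} for all real k > 0. Then E[X] - E[min(X, 8a)] ≤ e²·e^{-8/e}·a ≤ a/2, and hence E[min(X, 8a)] ≥ a/2. -/
open MeasureTheory

/-- If `X ≥ 0` has mean `a > 0` and `P(X ≥ k·e·a) ≤ e^{-k+1}` for all
real `k > 0`, then `E[X] - E[min(X, 8a)] ≤ e²·e^{-8/e}·a ≤ a/2`, hence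
`E[min(X, 8a)] ≥ a/2`. -/
theorem stmt3 {Ω : Type*} [MeasurableSpace Ω] (μ : Measure Ω) [IsProbabilityMeasure μ]
    (X : Ω → ℝ) (hX : Measurable X) (hXnn : ∀ ω, 0 ≤ X ω)
    (hint : Integrable X μ) (a : ℝ) (ha : a = ∫ ω, X ω ∂μ) (hapos : 0 < a)
    (htail : ∀ k : ℝ, 0 < k →
      (μ {ω | k * Real.exp 1 * a ≤ X ω}).toReal ≤ Real.exp (-k + 1)) :
    (∫ ω, X ω ∂μ) - ∫ ω, min (X ω) (8 * a) ∂μ ≤ Real.exp 1 ^ 2 * Real.exp (-8 / Real.exp 1) * a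
      ∧ Real.exp 1 ^ 2 * Real.exp (-8 / Real.exp 1) * a ≤ a / 2
      ∧ a / 2 ≤ ∫ ω, min (X ω) (8 * a) ∂μ := by
  have epos : (0:ℝ) < Real.exp 1 := Real.exp_pos 1
  -- integrability of min
  have hmin_meas : Measurable fun ω => min (X ω) (8 * a) := hX.min measurable_const
  have hmin_int : Integrable (fun ω => min (X ω) (8 * a)) μ := by
    refine hint.mono hmin_meas.aestronglyMeasurable ?_
    filter_upwards with ω
    rw [Real.norm_eq_abs, Real.norm_eq_abs, abs_of_nonneg (hXnn ω),
      abs_of_nonneg (le_min (hXnn ω) (by positivity))]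
    exact min_le_left _ _
  set Y : Ω → ℝ := fun ω => X ω - min (X ω) (8 * a) with hY
  have hY_int : Integrable Y μ := hint.sub hmin_int
  have hY_nn : ∀ ω, 0 ≤ Y ω := fun ω => sub_nonneg.2 (min_le_left _ _)
  have hsub : (∫ ω, X ω ∂μ) - ∫ ω, min (X ω) (8 * a) ∂μ = ∫ ω, Y ω ∂μ :=
    (integral_sub hint hmin_int).symm
  -- layer cake
  have hlc : ∫ ω, Y ω ∂μ = ∫ t in Set.Ioi 0, ENNReal.toReal (μ {ω | t < Y ω}) :=
    hY_int.integral_eq_integral_meas_lt (Filter.Eventually.of_forall hY_nn)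
  set b : ℝ := (Real.exp 1 * a)⁻¹ with hb
  have hbpos : 0 < b := by positivity
  set g : ℝ → ℝ := fun t => Real.exp (1 - 8 / Real.exp 1) * Real.exp (-(b * t)) with hg
  -- pointwise tail bound for t > 0
  have hbound : ∀ t ∈ Set.Ioi (0:ℝ), ENNReal.toReal (μ {ω | t < Y ω}) ≤ g t := by
    intro t ht
    simp only [Set.mem_Ioi] at ht
    set k : ℝ := 8 / Real.exp 1 + b * t with hk
    have hkpos : 0 < k := by positivity
    have hsubset : {ω | t < Y ω} ⊆ {ω | k * Real.exp 1 * a ≤ X ω} := by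
      intro ω hω
      simp only [Set.mem_setOf_eq] at hω ⊢
      have h8 : 8 * a ≤ X ω := by
        by_contra h
        push_neg at h
        have : Y ω = 0 := by simp [hY, min_eq_left h.le]
        linarith
      have hYω : Y ω = X ω - 8 * a := by simp [hY, min_eq_right h8]
      have hkea : k * Real.exp 1 * a = 8 * a + t := by
        rw [hk, hb]
        field_simp
      rw [hkea]
      linarith [hω.trans_eq hYω]
    have h1 : ENNReal.toReal (μ {ω | t < Y ω}) ≤
        ENNReal.toReal (μ {ω | k * Real.exp 1 * a ≤ X ω}) := by
      apply ENNReal.toReal_mono (measure_ne_top μ _) (measure_mono hsubset)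
    refine h1.trans ((htail k hkpos).trans_eq ?_)
    show Real.exp (-k + 1) = Real.exp (1 - 8 / Real.exp 1) * Real.exp (-(b * t))
    rw [← Real.exp_add]
    congr 1
    rw [hk]
    ring
  -- integrability of g on Ioi 0
  have hg_int : IntegrableOn g (Set.Ioi 0) := by
    have := (exp_neg_integrableOn_Ioi 0 hbpos).const_mul (Real.exp (1 - 8 / Real.exp 1))
    simpa [hg, neg_mul, IntegrableOn] using this
  -- bound the integral
  have hmono : ∫ t in Set.Ioi 0, ENNReal.toReal (μ {ω | t < Y ω}) ≤ ∫ t in Set.Ioi 0, g t := by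
    refine integral_mono_of_nonneg ?_ hg_int ?_
    · filter_upwards with t using ENNReal.toReal_nonneg
    · exact (ae_restrict_iff' measurableSet_Ioi).2 (Filter.Eventually.of_forall hbound)
  -- compute ∫ g
  have hgval : ∫ t in Set.Ioi 0, g t = Real.exp 1 ^ 2 * Real.exp (-8 / Real.exp 1) * a := by
    rw [hg, integral_const_mul]
    have : ∫ t in Set.Ioi (0:ℝ), Real.exp (-(b * t))
        = ∫ t in Set.Ioi (0:ℝ), (fun x => Real.exp (-x)) (b * t) := by simp
    rw [this, integral_comp_mul_left_Ioi (fun x => Real.exp (-x)) 0 hbpos]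
    simp only [mul_zero, integral_exp_neg_Ioi, neg_zero, Real.exp_zero, smul_eq_mul, mul_one]
    rw [hb, inv_inv]
    have he : Real.exp (1 - 8 / Real.exp 1) = Real.exp 1 * Real.exp (-8 / Real.exp 1) := by
      rw [← Real.exp_add]; congr 1; ring
    rw [he]; ring
  have first : (∫ ω, X ω ∂μ) - ∫ ω, min (X ω) (8 * a) ∂μ
      ≤ Real.exp 1 ^ 2 * Real.exp (-8 / Real.exp 1) * a := by
    rw [hsub, hlc, ← hgval]; exact hmono
  -- numeric: e² e^{-8/e} ≤ 1/2
  have hnum : Real.exp 1 ^ 2 * Real.exp (-8 / Real.exp 1) ≤ 1 / 2 := by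
    have h : Real.exp 1 ^ 2 * Real.exp (-8 / Real.exp 1) = Real.exp (2 - 8 / Real.exp 1) := by
      rw [show Real.exp 1 ^ 2 = Real.exp 2 by rw [← Real.exp_nat_mul]; norm_num,
        ← Real.exp_add]
      ring_nf
    rw [h]
    have h2 : (1:ℝ)/2 = Real.exp (-Real.log 2) := by
      rw [Real.exp_neg, Real.exp_log (by norm_num)]
      norm_num
    rw [h2]
    apply Real.exp_le_exp.2
    have hlog : Real.log 2 < 0.6931471808 := by linarith [Real.log_two_lt_d9]
    have he : Real.exp 1 < 2.7182818286 := Real.exp_one_lt_d9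
    have h8e : (8:ℝ) / 2.7182818286 < 8 / Real.exp 1 :=
      div_lt_div_of_pos_left (by norm_num) epos he
    have : (2.6931471808 : ℝ) < 8 / 2.7182818286 := by norm_num
    linarith
  have second : Real.exp 1 ^ 2 * Real.exp (-8 / Real.exp 1) * a ≤ a / 2 := by
    have := mul_le_mul_of_nonneg_right hnum hapos.le
    linarith
  refine ⟨first, second, ?_⟩
  have := first.trans second
  linarith [ha ▸ this]
end

section
/- Let λ : ℕ → ℝ≥0 be a subadditive function (λ(s+t) ≤ λ(s) + λ(t)). Suppose nonnegative integers x_1, ..., x_m satisfy ∑ x_i = N and x_i ≤ k for all i, where k is a positive integer. Then ∑_i λ(x_i) ≥ (N/(2k)) · λ(⌊k/2⌋). -/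
/-- If `lam : ℕ → ℝ` is nonnegative, nondecreasing and subadditive with
`lam 0 = 0`, and nonnegative integers `x 1, ..., x m` satisfy `∑ x i = N` and
`x i ≤ k`, then `∑ lam (x i) ≥ (N / (2k)) · lam (⌊k/2⌋)`. -/
theorem stmt7 (lam : ℕ → ℝ) (hnonneg : ∀ n, 0 ≤ lam n) (hzero : lam 0 = 0)
    (hmono : Monotone lam) (hsub : ∀ s t : ℕ, lam (s + t) ≤ lam s + lam t)
    (m k N : ℕ) (hk : 1 ≤ k) (x : Fin m → ℕ)
    (hsum : ∑ i, x i = N) (hbound : ∀ i, x i ≤ k) :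
    ((N : ℝ) / (2 * k)) * lam (k / 2) ≤ ∑ i, lam (x i) := by
  have hmul : ∀ q n : ℕ, lam (q * n) ≤ q * lam n := by
    intro q n
    induction q with
    | zero => simp [hzero]
    | succ q ih =>
      have : lam ((q + 1) * n) = lam (q * n + n) := by ring_nf
      rw [this]
      calc lam (q * n + n) ≤ lam (q * n) + lam n := hsub _ _
        _ ≤ q * lam n + lam n := by linarith
        _ = (q + 1 : ℕ) * lam n := by push_cast; ring
  have key : ∀ n : ℕ, n ≤ k → (n : ℝ) * lam (k / 2) ≤ (2 * k) * lam n := by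
    intro n hn
    rcases Nat.eq_zero_or_pos n with h0 | hpos
    · simp [h0, hzero]
    · set q := k / 2 / n + 1 with hqdef
      have e1 : n * (k / 2 / n) + k / 2 % n = k / 2 := Nat.div_add_mod _ n
      have e2 : q * n = n * (k / 2 / n) + n := by rw [hqdef]; ring
      have hm : k / 2 % n < n := Nat.mod_lt _ hpos
      have hq1 : k / 2 ≤ q * n := by omega
      have hq2 : q * n ≤ 2 * k := by
        have h2 : k / 2 ≤ k := Nat.div_le_self _ _
        omega
      have h3 : lam (k / 2) ≤ lam (q * n) := hmono hq1
      have h4 : lam (q * n) ≤ q * lam n := hmul q n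
      have h5 : (n : ℝ) * lam (k / 2) ≤ (n : ℝ) * (q * lam n) := by
        apply mul_le_mul_of_nonneg_left (le_trans h3 h4)
        positivity
      have h6 : (n : ℝ) * q ≤ 2 * k := by
        have h7 : n * q ≤ 2 * k := by rw [Nat.mul_comm]; exact hq2
        exact_mod_cast h7
      calc (n : ℝ) * lam (k / 2) ≤ (n : ℝ) * q * lam n := by linarith [h5]
        _ ≤ (2 * k) * lam n := mul_le_mul_of_nonneg_right h6 (hnonneg n)
  have hkpos : (0 : ℝ) < 2 * k := by positivity
  rw [div_mul_eq_mul_div, div_le_iff₀ hkpos]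
  calc (N : ℝ) * lam (k / 2) = ∑ i, (x i : ℝ) * lam (k / 2) := by
        rw [← Finset.sum_mul, ← hsum]; push_cast; ring
    _ ≤ ∑ i, (2 * k) * lam (x i) := Finset.sum_le_sum fun i _ => key (x i) (hbound i)
    _ = (∑ i, lam (x i)) * (2 * k) := by rw [← Finset.mul_sum]; ring
end

section
/- For any γ ∈ [1/2, 1) and any function f : ℝ≥1 → ℝ>0 with f(1) = 1 satisfying a^{1/2} f(n) ≤ f(an) ≤ a^γ f(n) for all real a, n ≥ 1, there exists a bounded sequence of integers (m_ℓ) with m_ℓ ≥ 2 such that, defining v_ℓ = m_1⋯m_ℓ, r_ℓ = ∏_{i≤ℓ} m_i/(m_i-1), n_ℓ = r_ℓ v_ℓ, ℓ(n) = min{ℓ : n_ℓ ≥ n}, and α_n = log(v_{ℓ(n)})/log(n), one has c_γ^{-1} ≤ f(n)/n^{α_n} ≤ 2 c_γ for all n ≥ 1, where c_γ = 3 e^{1/(1-γ)}. -/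
open Finset

/-- `v_ℓ = m_1 ⋯ m_ℓ` (volume). -/
noncomputable def vSeq (m : ℕ → ℕ) (ℓ : ℕ) : ℝ := ∏ i ∈ Finset.range ℓ, (m i : ℝ)

/-- `r_ℓ = ∏_{i ≤ ℓ} m_i/(m_i - 1)` (resistance). -/
noncomputable def rSeq (m : ℕ → ℕ) (ℓ : ℕ) : ℝ :=
  ∏ i ∈ Finset.range ℓ, (m i : ℝ) / ((m i : ℝ) - 1)

/-- `n_ℓ = v_ℓ r_ℓ`. -/
noncomputable def nSeq (m : ℕ → ℕ) (ℓ : ℕ) : ℝ := vSeq m ℓ * rSeq m ℓ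

/-- `ℓ(n) = min {ℓ : n_ℓ ≥ n}`. -/
noncomputable def ellOf (m : ℕ → ℕ) (n : ℕ) : ℕ := sInf {ℓ : ℕ | (n : ℝ) ≤ nSeq m ℓ}

/-- `α_n = log v_{ℓ(n)} / log n`. -/
noncomputable def alphaOf (m : ℕ → ℕ) (n : ℕ) : ℝ :=
  Real.log (vSeq m (ellOf m n)) / Real.log n

open Classical in
/-- State of the inductive construction: `(v_ℓ, n_ℓ)`. -/
noncomputable def stmt9T (f : ℝ → ℝ) (M : ℕ) : ℕ → ℝ × ℝ
  | 0 => (1, 1)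
  | ℓ + 1 =>
      let p := stmt9T f M ℓ
      let c : ℕ := if f p.2 ≤ p.1 then 2 else M
      ((c : ℝ) * p.1, p.2 * (c : ℝ) ^ 2 / ((c : ℝ) - 1))

open Classical in
/-- The sequence `m_ℓ` of the inductive construction. -/
noncomputable def stmt9M (f : ℝ → ℝ) (M : ℕ) (ℓ : ℕ) : ℕ :=
  if f (stmt9T f M ℓ).2 ≤ (stmt9T f M ℓ).1 then 2 else M

set_option maxHeartbeats 1600000

/-- For `γ ∈ [1/2, 1)` and `f` with `f(1) = 1` satisfying the
log-Lipschitz condition `a^{1/2} f(n) ≤ f(an) ≤ a^γ f(n)` for all `a, n ≥ 1`,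
there is a bounded sequence `(m_ℓ)` of integers `≥ 2` so that
`c_γ⁻¹ ≤ f(n)/n^{α_n} ≤ 2 c_γ` for all `n ≥ 1`, where `c_γ = 3 e^{1/(1-γ)}`. -/
theorem stmt9 (γ : ℝ) (hγ : γ ∈ Set.Ico (1 / 2 : ℝ) 1)
    (f : ℝ → ℝ) (hf1 : f 1 = 1) (hfpos : ∀ x : ℝ, 1 ≤ x → 0 < f x)
    (hlip : ∀ a n : ℝ, 1 ≤ a → 1 ≤ n →
      a ^ ((1 : ℝ) / 2) * f n ≤ f (a * n) ∧ f (a * n) ≤ a ^ γ * f n) :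
    ∃ m : ℕ → ℕ, (∀ ℓ, 2 ≤ m ℓ) ∧ (∃ B : ℕ, ∀ ℓ, m ℓ ≤ B) ∧
      ∀ n : ℕ, 1 ≤ n →
        (3 * Real.exp (1 / (1 - γ)))⁻¹ ≤ f n / (n : ℝ) ^ alphaOf m n ∧
        f n / (n : ℝ) ^ alphaOf m n ≤ 2 * (3 * Real.exp (1 / (1 - γ))) := by
  obtain ⟨hγ1, hγ2⟩ := hγ
  have h1γ : (0:ℝ) < 1 - γ := by linarith
  set E : ℝ := Real.exp (1 / (1 - γ)) with hEdef
  -- basic facts about E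
  have hinv2 : (2:ℝ) ≤ 1 / (1 - γ) := by
    rw [le_div_iff₀ h1γ]; linarith
  have hE7 : (7:ℝ) < E := by
    have h1 : Real.exp 2 ≤ E := Real.exp_le_exp.2 hinv2
    have h2 : (2.7:ℝ) < Real.exp 1 := by
      have := Real.exp_one_gt_d9; linarith
    have h3 : (2.7:ℝ) * 2.7 < Real.exp 1 * Real.exp 1 := by
      have := Real.exp_pos 1; nlinarith
    have h4 : Real.exp 1 * Real.exp 1 = Real.exp 2 := by
      rw [← Real.exp_add]; norm_num
    nlinarith
  have hE1 : (1:ℝ) ≤ E := by linarith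
  set M : ℕ := ⌈E⌉₊ with hMdef
  have hEM : E ≤ (M:ℝ) := Nat.le_ceil E
  have hME : (M:ℝ) < E + 1 := Nat.ceil_lt_add_one (by linarith)
  have hM8 : 8 ≤ M := by
    have : (7:ℕ) < M := Nat.lt_ceil.2 (by exact_mod_cast hE7)
    omega
  have hM8R : (8:ℝ) ≤ (M:ℝ) := by exact_mod_cast hM8
  have hM1 : (1:ℝ) ≤ (M:ℝ) - 1 := by linarith
  have hsq1 : (1:ℝ) ≤ Real.sqrt ((M:ℝ) - 1) := by
    have h := Real.sqrt_le_sqrt hM1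
    rwa [Real.sqrt_one] at h
  have hsqpos : (0:ℝ) < Real.sqrt ((M:ℝ) - 1) := by linarith
  -- key inequality : (M²/(M-1))^γ ≤ M
  have hkey : ((M:ℝ)^2 / ((M:ℝ) - 1)) ^ γ ≤ (M:ℝ) := by
    have hMpos : (0:ℝ) < (M:ℝ) := by linarith
    have hM1pos : (0:ℝ) < (M:ℝ) - 1 := by linarith
    have hapos : (0:ℝ) < (M:ℝ)^2 / ((M:ℝ) - 1) := by positivity
    have hlog : γ * Real.log ((M:ℝ)^2 / ((M:ℝ) - 1)) ≤ Real.log (M:ℝ) := by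
      have h1 : Real.log ((M:ℝ)^2 / ((M:ℝ) - 1)) =
          Real.log (M:ℝ) + Real.log ((M:ℝ) / ((M:ℝ) - 1)) := by
        rw [← Real.log_mul (by positivity) (by positivity)]
        congr 1; field_simp
      have h2 : Real.log ((M:ℝ) / ((M:ℝ) - 1)) ≤ 1 / ((M:ℝ) - 1) := by
        have := Real.log_le_sub_one_of_pos (show (0:ℝ) < (M:ℝ)/((M:ℝ)-1) by positivity)
        have heq : (M:ℝ)/((M:ℝ)-1) - 1 = 1/((M:ℝ)-1) := by field_simp; ring
        linarith [heq ▸ this]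
      have h3 : (1:ℝ)/((M:ℝ)-1) ≤ 1/7 := by
        rw [div_le_div_iff₀ hM1pos (by norm_num)]; linarith
      have h4 : 1 / (1 - γ) ≤ Real.log (M:ℝ) := by
        calc 1 / (1 - γ) = Real.log E := (Real.log_exp _).symm
          _ ≤ Real.log (M:ℝ) := Real.log_le_log (by positivity) hEM
      have h5 : (1:ℝ) ≤ (1 - γ) * Real.log (M:ℝ) := by
        have he : (1-γ) * (1/(1-γ)) = 1 := by field_simp
        have := mul_le_mul_of_nonneg_left h4 (le_of_lt h1γ)
        linarith
      have hγ0 : (0:ℝ) ≤ γ := by linarith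
      nlinarith [h2, h3, h5, hγ0, Real.log_nonneg (show (1:ℝ) ≤ (M:ℝ) by linarith)]
    calc ((M:ℝ)^2 / ((M:ℝ) - 1)) ^ γ
        = Real.exp (γ * Real.log ((M:ℝ)^2 / ((M:ℝ) - 1))) := by
          rw [Real.rpow_def_of_pos hapos]; ring_nf
      _ ≤ Real.exp (Real.log (M:ℝ)) := Real.exp_le_exp.2 hlog
      _ = (M:ℝ) := Real.exp_log hMpos
  -- the sequence
  set m : ℕ → ℕ := stmt9M f M with hm
  refine ⟨m, ?_, ⟨M, ?_⟩, ?_⟩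
  · intro ℓ; rw [hm, stmt9M]; split <;> omega
  · intro ℓ; rw [hm, stmt9M]; split <;> omega
  -- correspondence between stmt9T and (vSeq, nSeq)
  have hm2 : ∀ ℓ, 2 ≤ m ℓ := by intro ℓ; rw [hm, stmt9M]; split <;> omega
  have hmM : ∀ ℓ, m ℓ ≤ M := by intro ℓ; rw [hm, stmt9M]; split <;> omega
  have hrecv : ∀ ℓ, vSeq m (ℓ+1) = vSeq m ℓ * (m ℓ : ℝ) := by
    intro ℓ; rw [vSeq, vSeq, prod_range_succ]
  have hrecn : ∀ ℓ, nSeq m (ℓ+1) = nSeq m ℓ * (m ℓ : ℝ)^2 / ((m ℓ : ℝ) - 1) := by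
    intro ℓ
    rw [nSeq, nSeq, vSeq, vSeq, rSeq, rSeq, prod_range_succ, prod_range_succ]
    ring
  have hT : ∀ ℓ, (stmt9T f M ℓ).1 = vSeq m ℓ ∧ (stmt9T f M ℓ).2 = nSeq m ℓ := by
    intro ℓ
    induction ℓ with
    | zero => constructor <;> simp [stmt9T, vSeq, nSeq, rSeq]
    | succ k ih =>
      have h1 : stmt9T f M (k+1) =
          ((stmt9M f M k : ℝ) * (stmt9T f M k).1,
            (stmt9T f M k).2 * (stmt9M f M k : ℝ)^2 / ((stmt9M f M k : ℝ) - 1)) := rfl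
      rw [h1]
      constructor
      · simp only [hrecv, ih.1]; simp only [hm]; ring
      · simp only [hrecn, ih.2]; simp only [hm]
  have hmcase : ∀ ℓ, (f (nSeq m ℓ) ≤ vSeq m ℓ ∧ m ℓ = 2) ∨
      (vSeq m ℓ < f (nSeq m ℓ) ∧ m ℓ = M) := by
    intro ℓ
    by_cases h : f (nSeq m ℓ) ≤ vSeq m ℓ
    · left; refine ⟨h, ?_⟩
      rw [hm, stmt9M, (hT ℓ).1, (hT ℓ).2, if_pos h]
    · right; refine ⟨lt_of_not_ge h, ?_⟩
      rw [hm, stmt9M, (hT ℓ).1, (hT ℓ).2, if_neg h]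
  -- basic positivity / growth facts
  have hv1 : ∀ ℓ, (1:ℝ) ≤ vSeq m ℓ := by
    intro ℓ
    induction ℓ with
    | zero => simp [vSeq]
    | succ k ih =>
      rw [hrecv]
      have : (2:ℝ) ≤ (m k : ℝ) := by exact_mod_cast hm2 k
      nlinarith
  have hfacge : ∀ ℓ, (4:ℝ) ≤ (m ℓ : ℝ)^2 / ((m ℓ : ℝ) - 1) := by
    intro ℓ
    have h2 : (2:ℝ) ≤ (m ℓ : ℝ) := by exact_mod_cast hm2 ℓ
    rw [le_div_iff₀ (by linarith)]
    nlinarith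
  have hn1 : ∀ ℓ, (1:ℝ) ≤ nSeq m ℓ := by
    intro ℓ
    induction ℓ with
    | zero => simp [nSeq, vSeq, rSeq]
    | succ k ih =>
      rw [hrecn, mul_div_assoc]
      nlinarith [hfacge k]
  have hngrow : ∀ ℓ, (2:ℝ)^ℓ ≤ nSeq m ℓ := by
    intro ℓ
    induction ℓ with
    | zero => simp [nSeq, vSeq, rSeq]
    | succ k ih =>
      rw [hrecn, mul_div_assoc, pow_succ]
      have h1 : (0:ℝ) < (2:ℝ)^k := by positivity
      have h2 := mul_le_mul ih (hfacge k) (by norm_num : (0:ℝ) ≤ 4)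
        (le_trans (le_of_lt h1) ih)
      linarith
  -- monotonicity of f
  have hmono : ∀ x y : ℝ, 1 ≤ x → x ≤ y → f x ≤ f y := by
    intro x y hx hxy
    have hx0 : (0:ℝ) < x := by linarith
    have ha : 1 ≤ y / x := (one_le_div hx0).2 hxy
    have h := (hlip (y/x) x ha hx).1
    rw [div_mul_cancel₀ _ (ne_of_gt hx0)] at h
    have h2 : (1:ℝ) ≤ (y/x) ^ ((1:ℝ)/2) := Real.one_le_rpow ha (by norm_num)
    have h3 := mul_le_mul_of_nonneg_right h2 (le_of_lt (hfpos x hx))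
    rw [one_mul] at h3
    linarith
  -- the main invariant
  have inv : ∀ ℓ, vSeq m ℓ ≤ Real.sqrt ((M:ℝ) - 1) * f (nSeq m ℓ) ∧
      f (nSeq m ℓ) ≤ 2 * vSeq m ℓ := by
    intro ℓ
    induction ℓ with
    | zero =>
      have : vSeq m 0 = 1 := by simp [vSeq]
      have h2 : nSeq m 0 = 1 := by simp [nSeq, vSeq, rSeq]
      rw [this, h2, hf1]
      constructor
      · linarith
      · norm_num
    | succ k ih =>
      set a : ℝ := (m k : ℝ)^2 / ((m k : ℝ) - 1) with hadef
      have ha1 : (1:ℝ) ≤ a := by linarith [hfacge k]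
      have hnk := hn1 k
      have hvk := hv1 k
      obtain ⟨hlo, hhi⟩ := hlip a (nSeq m k) ha1 hnk
      have hmulnk : a * nSeq m k = nSeq m (k+1) := by rw [hrecn]; ring
      rw [hmulnk] at hlo hhi
      have hfk := hfpos (nSeq m k) hnk
      rcases hmcase k with ⟨hcond, hmk⟩ | ⟨hcond, hmk⟩
      · -- m k = 2, a = 4
        have ha4 : a = 4 := by rw [hadef, hmk]; norm_num
        have hv : vSeq m (k+1) = vSeq m k * 2 := by
          rw [hrecv, hmk]; norm_num
        constructor
        · -- lower bound
          have h12 : (4:ℝ) ^ ((1:ℝ)/2) = 2 := by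
            rw [← Real.sqrt_eq_rpow]
            rw [show (4:ℝ) = 2^2 by norm_num, Real.sqrt_sq (by norm_num : (0:ℝ) ≤ 2)]
          rw [ha4, h12] at hlo
          rw [hv]
          calc vSeq m k * 2 ≤ (Real.sqrt ((M:ℝ)-1) * f (nSeq m k)) * 2 := by
                nlinarith [ih.1]
            _ = Real.sqrt ((M:ℝ)-1) * (2 * f (nSeq m k)) := by ring
            _ ≤ Real.sqrt ((M:ℝ)-1) * f (nSeq m (k+1)) := by
                apply mul_le_mul_of_nonneg_left hlo (le_of_lt hsqpos)
        · -- upper bound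
          have h4γ : (4:ℝ) ^ γ ≤ 4 := by
            calc (4:ℝ) ^ γ ≤ (4:ℝ) ^ (1:ℝ) :=
                  Real.rpow_le_rpow_of_exponent_le (by norm_num) (le_of_lt hγ2)
              _ = 4 := Real.rpow_one 4
          rw [ha4] at hhi
          rw [hv]
          calc f (nSeq m (k+1)) ≤ 4 ^ γ * f (nSeq m k) := hhi
            _ ≤ 4 * f (nSeq m k) := by nlinarith
            _ ≤ 4 * vSeq m k := by nlinarith
            _ = 2 * (vSeq m k * 2) := by ring
      · -- m k = M
        have hv : vSeq m (k+1) = vSeq m k * (M:ℝ) := by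
          rw [hrecv, hmk]
        have haM : a = (M:ℝ)^2 / ((M:ℝ) - 1) := by rw [hadef, hmk]
        constructor
        · -- lower bound
          have h12 : a ^ ((1:ℝ)/2) = (M:ℝ) / Real.sqrt ((M:ℝ)-1) := by
            rw [← Real.sqrt_eq_rpow, haM, Real.sqrt_div (by positivity) _,
              Real.sqrt_sq (by positivity)]
          rw [h12] at hlo
          rw [hv]
          have key : Real.sqrt ((M:ℝ)-1) * ((M:ℝ) / Real.sqrt ((M:ℝ)-1) * f (nSeq m k))
              = (M:ℝ) * f (nSeq m k) := by
            field_simp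
          calc vSeq m k * (M:ℝ) ≤ f (nSeq m k) * (M:ℝ) := by nlinarith
            _ = Real.sqrt ((M:ℝ)-1) * ((M:ℝ) / Real.sqrt ((M:ℝ)-1) * f (nSeq m k)) := by
                rw [key]; ring
            _ ≤ Real.sqrt ((M:ℝ)-1) * f (nSeq m (k+1)) := by
                apply mul_le_mul_of_nonneg_left hlo (le_of_lt hsqpos)
        · -- upper bound
          rw [haM] at hhi
          rw [hv]
          calc f (nSeq m (k+1)) ≤ ((M:ℝ)^2/((M:ℝ)-1)) ^ γ * f (nSeq m k) := hhi
            _ ≤ (M:ℝ) * f (nSeq m k) := by nlinarith [hkey]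
            _ ≤ (M:ℝ) * (2 * vSeq m k) := by nlinarith [ih.2]
            _ = 2 * (vSeq m k * (M:ℝ)) := by ring
  -- conclusion
  intro n hn
  have hcE : (1:ℝ) ≤ 3 * E := by linarith
  rcases eq_or_lt_of_le hn with heq | hn2
  · -- n = 1
    have hn1' : n = 1 := heq.symm
    subst hn1'
    have hell : ellOf m 1 = 0 := by
      rw [ellOf]
      apply Nat.sInf_eq_zero.2
      left
      show ((1:ℕ):ℝ) ≤ nSeq m 0
      simp [nSeq, vSeq, rSeq]
    have halpha : alphaOf m 1 = 0 := by
      rw [alphaOf, hell]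
      simp [vSeq]
    rw [halpha]
    push_cast
    rw [Real.rpow_zero, hf1, div_one]
    constructor
    · rw [inv_le_one_iff₀]; right; linarith
    · linarith
  · -- n ≥ 2
    have hn2' : 2 ≤ n := hn2
    have hnR : (2:ℝ) ≤ (n:ℝ) := by exact_mod_cast hn2'
    set S : Set ℕ := {ℓ : ℕ | (n : ℝ) ≤ nSeq m ℓ} with hS
    have hSne : S.Nonempty := by
      refine ⟨n, ?_⟩
      show (n:ℝ) ≤ nSeq m n
      calc (n:ℝ) ≤ 2^n := by
            exact_mod_cast le_of_lt (Nat.lt_two_pow_self (n := n))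
        _ ≤ nSeq m n := hngrow n
    set L : ℕ := ellOf m n with hLdef
    have hLmem : (n:ℝ) ≤ nSeq m L := Nat.sInf_mem hSne
    have hL0 : L ≠ 0 := by
      intro h
      rw [h] at hLmem
      have : nSeq m 0 = 1 := by simp [nSeq, vSeq, rSeq]
      rw [this] at hLmem
      linarith
    obtain ⟨K, hK⟩ : ∃ K, L = K + 1 := ⟨L - 1, by omega⟩
    have hKnot : nSeq m K < (n:ℝ) := by
      by_contra h
      push_neg at h
      have hKS : K ∈ S := h
      have h2 : sInf S ≤ K := Nat.sInf_le hKS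
      have h3 : L = sInf S := rfl
      omega
    -- n^α = vSeq m L
    have hvL := hv1 L
    have hvLpos : (0:ℝ) < vSeq m L := by linarith
    have hlogn : Real.log n ≠ 0 := by
      apply ne_of_gt
      apply Real.log_pos
      linarith
    have hpow : (n:ℝ) ^ alphaOf m n = vSeq m L := by
      rw [alphaOf, ← hLdef, Real.rpow_def_of_pos (by linarith : (0:ℝ) < (n:ℝ))]
      rw [mul_div_assoc', mul_comm, mul_div_assoc, div_self hlogn, mul_one]
      exact Real.exp_log hvLpos
    rw [hpow]
    have hfn : f (n:ℝ) ≤ 2 * vSeq m L := by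
      calc f (n:ℝ) ≤ f (nSeq m L) := hmono _ _ (by linarith) hLmem
        _ ≤ 2 * vSeq m L := (inv L).2
    have hfnpos : (0:ℝ) < f n := hfpos _ (by linarith)
    constructor
    · -- lower bound
      have hmon : f (nSeq m K) ≤ f (n:ℝ) := hmono _ _ (hn1 K) (le_of_lt hKnot)
      have hvK := hv1 K
      have hvrel : vSeq m L = vSeq m K * (m K : ℝ) := by rw [hK, hrecv]
      have hfK : (0:ℝ) < f (nSeq m K) := hfpos _ (hn1 K)
      have hmain : vSeq m L ≤ 3 * E * f n := by
        rcases hmcase K with ⟨hcond, hmk⟩ | ⟨hcond, hmk⟩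
        · -- m K = 2
          have h1 : vSeq m K ≤ Real.sqrt ((M:ℝ)-1) * f (nSeq m K) := (inv K).1
          have hsqE : Real.sqrt ((M:ℝ)-1) ≤ E := by
            have h := Real.sqrt_le_sqrt (show (M:ℝ) - 1 ≤ E^2 by nlinarith)
            rwa [Real.sqrt_sq (by linarith : (0:ℝ) ≤ E)] at h
          rw [hvrel, hmk]
          push_cast
          calc vSeq m K * 2 ≤ (Real.sqrt ((M:ℝ)-1) * f (nSeq m K)) * 2 := by linarith
            _ ≤ (E * f (nSeq m K)) * 2 := by nlinarith
            _ ≤ (E * f (n:ℝ)) * 2 := by nlinarith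
            _ ≤ 3 * E * f n := by nlinarith
        · -- m K = M
          rw [hvrel, hmk]
          calc vSeq m K * (M:ℝ) ≤ f (n:ℝ) * (M:ℝ) := by nlinarith
            _ ≤ f (n:ℝ) * (2 * E) := by nlinarith
            _ ≤ 3 * E * f n := by nlinarith
      rw [inv_eq_one_div, div_le_div_iff₀ (by linarith) hvLpos]
      linarith
    · -- upper bound
      rw [div_le_iff₀ hvLpos]
      calc f (n:ℝ) ≤ 2 * vSeq m L := hfn
        _ ≤ 2 * (3 * E) * vSeq m L := by nlinarith
end
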